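/- arXiv:2501.12205 — 4 statements merged into one kernel-verified Lean document; each statement's English description precedes it below -/
import Mathlib

section
/- If G is an (n,d,α)-expander (i.e., the spectral norm of A_G − (d/n)J is at most αd) and W ⊆ V(G) satisfies |V(G) \ W| ≤ αn, then the induced subgraph G[W] is a (|W|, d, 2α)-expander, i.e., the spectral norm of A_{G[W]} − (d/|W|)J_{|W|} is at most 2αd. -/
open Real Finset
open scoped ENNReal

noncomputable def specNorm {V : Type*} [Fintype V] [DecidableEq V] (M : Matrix V V ℝ) : ℝ :=
  ‖Matrix.toEuclideanCLM (𝕜 := ℝ) M‖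

noncomputable def edgeCount {V : Type*} [Fintype V] (A : Matrix V V ℝ) (X Y : Finset V) : ℝ :=
  ∑ x ∈ X, ∑ y ∈ Y, A x y

/-! Split `A_{G[W]} - (d/|W|) J` as the principal submatrix of `A_G - (d/n) J` plus
`(d/n - d/|W|) J`. Compressing to a principal submatrix does not increase the operator norm, so the
first term has norm at most `αd`; the second has norm `|d/n - d/|W|| · |W| = d (n - |W|) / n`,
which is at most `αd` because `n - |W| ≤ αn`. -/

open scoped Matrix.Norms.L2Operator

namespace Matrix
variable {𝕜 : Type*} [RCLike 𝕜] {m n : Type*} [Fintype m] [Fintype n]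
  [DecidableEq m] [DecidableEq n]

lemma l2_opNorm_one_le : ‖(1 : Matrix n n 𝕜)‖ ≤ 1 := by
  rw [cstar_norm_def, map_one]
  exact ContinuousLinearMap.norm_id_le

lemma l2_opNorm_submatrix_le (A : Matrix n n 𝕜) {f : m → n} (hf : Function.Injective f) :
    ‖A.submatrix f f‖ ≤ ‖A‖ := by
  set P : Matrix m n 𝕜 := (1 : Matrix n n 𝕜).submatrix f id
  have hPP : P * Pᴴ = 1 := by
    rw [conjTranspose_submatrix, conjTranspose_one,
      ← submatrix_mul _ _ _ _ _ Function.bijective_id, mul_one, submatrix_one _ hf]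
  -- C*-identity: `‖P‖² = ‖P Pᴴ‖ = ‖1‖`.
  have hP : ‖P‖ ≤ 1 := by
    have h := l2_opNorm_conjTranspose_mul_self Pᴴ
    rw [conjTranspose_conjTranspose, hPP, l2_opNorm_conjTranspose] at h
    nlinarith [l2_opNorm_one_le (𝕜 := 𝕜) (n := m), norm_nonneg P]
  have hA : A.submatrix f f = P * A * Pᴴ := by
    ext i j
    simp [P, mul_apply, one_apply]
  calc ‖A.submatrix f f‖ = ‖P * A * Pᴴ‖ := by rw [hA]
    _ ≤ ‖P‖ * ‖A‖ * ‖Pᴴ‖ := by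
      grw [l2_opNorm_mul, l2_opNorm_mul]
    _ ≤ ‖A‖ := by
      rw [l2_opNorm_conjTranspose, mul_right_comm]
      exact mul_le_of_le_one_left (norm_nonneg A) (mul_le_one₀ hP (norm_nonneg P) hP)

lemma l2_opNorm_of_const_one_le : ‖(of fun _ _ => 1 : Matrix n n 𝕜)‖ ≤ Fintype.card n := by
  set J : Matrix n n 𝕜 := of fun _ _ => 1
  have hJJ : Jᴴ * J = (Fintype.card n : 𝕜) • J := by
    ext i j
    simp [J, mul_apply]
  -- C*-identity: `‖J‖² = card n · ‖J‖`.
  have h := l2_opNorm_conjTranspose_mul_self J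
  rw [hJJ, norm_smul, RCLike.norm_natCast] at h
  rcases (norm_nonneg J).eq_or_lt with h0 | hpos
  · rw [← h0]; positivity
  · exact (mul_right_cancel₀ hpos.ne' h).ge

end Matrix

lemma abs_div_sub_div_mul_le {d α : ℝ} {w n : ℕ} (hαd : 0 ≤ α * d) (hwn : w ≤ n)
    (h : (n : ℝ) - w ≤ α * n) : |d / n - d / w| * w ≤ α * d := by
  rcases Nat.eq_zero_or_pos w with rfl | hw
  · simpa using hαd
  rcases hwn.eq_or_lt with rfl | hwn
  · simpa using hαd
  have hw' : (0 : ℝ) < w := by exact_mod_cast hw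
  have hwn' : (w : ℝ) < n := by exact_mod_cast hwn
  have hn : (0 : ℝ) < n := hw'.trans hwn'
  have hα : 0 < α := pos_of_mul_pos_left (show 0 < α * n by linarith) hn.le
  have hd : 0 ≤ d := nonneg_of_mul_nonneg_right hαd hα
  calc |d / n - d / w| * w = d * ((n - w) / n) := by
        rw [abs_sub_comm, abs_of_nonneg (sub_nonneg.2 (div_le_div_of_nonneg_left hd hw' hwn'.le))]
        field_simp
    _ ≤ d * α := by gcongr; rwa [div_le_iff₀ hn]
    _ = α * d := mul_comm d α

theorem stmt_0 {V : Type*} [Fintype V] [DecidableEq V] (G : SimpleGraph V) [DecidableRel G.Adj]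
    (n : ℕ) (hn : Fintype.card V = n) (d α : ℝ)
    (hexp : specNorm (G.adjMatrix ℝ - (d / n) • Matrix.of (fun _ _ => (1:ℝ))) ≤ α * d)
    (W : Finset V) (hW : ((Wᶜ.card : ℝ) ≤ α * n)) :
    specNorm ((G.adjMatrix ℝ).submatrix (fun x : W => (x : V)) (fun x : W => (x : V))
        - (d / W.card) • Matrix.of (fun _ _ => (1:ℝ))) ≤ 2 * α * d := by
  rw [specNorm, ← Matrix.cstar_norm_def] at hexp ⊢
  have hαd : 0 ≤ α * d := (norm_nonneg _).trans hexp
  have hWn : W.card ≤ n := hn ▸ W.card_le_univ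
  have hWc : (n : ℝ) - W.card ≤ α * n := by
    rwa [card_compl, hn, Nat.cast_sub hWn] at hW
  have hsplit : (G.adjMatrix ℝ).submatrix (fun x : W => (x : V)) (fun x : W => (x : V))
        - (d / W.card) • Matrix.of (fun _ _ => (1:ℝ))
      = (G.adjMatrix ℝ - (d / n) • Matrix.of (fun _ _ => (1:ℝ))).submatrix (↑) (↑)
        + (d / n - d / W.card) • Matrix.of (fun _ _ => (1:ℝ)) := by
    ext i j
    simp [sub_smul]
  calc _ = ‖(G.adjMatrix ℝ - (d / n) • Matrix.of (fun _ _ => (1:ℝ))).submatrix (↑) (↑)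
        + (d / n - d / W.card) • (Matrix.of (fun _ _ => (1:ℝ)) : Matrix W W ℝ)‖ := by
        rw [hsplit]
    _ ≤ α * d + |d / n - d / W.card| * W.card := by
        grw [norm_add_le, norm_smul, Matrix.l2_opNorm_submatrix_le _ Subtype.coe_injective,
          Matrix.l2_opNorm_of_const_one_le, hexp, Real.norm_eq_abs, Fintype.card_coe]
    _ ≤ α * d + α * d := by grw [abs_div_sub_div_mul_le hαd hWn hWc]
    _ = 2 * α * d := by ring
end

section
/- For the kernel K(α,β) = sin(|α| − min{|β|, π/2}) defined on (−π, π] × (−π, π], one has K(α,β) + K(β,α) ≤ 𝟙[|α| ≥ π/2] + 𝟙[|β| ≥ π/2] for all α, β ∈ (−π, π]. -/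
open Real

lemma sin_sub_add_sin_sub_pi_div_two_le_one {x y : ℝ} (hy₀ : -(π / 2) ≤ y) (hy : y ≤ π / 2) :
    sin (x - y) + sin (y - π / 2) ≤ 1 := by
  rw [sin_sub_pi_div_two]
  linarith [sin_le_one (x - y), cos_nonneg_of_mem_Icc ⟨hy₀, hy⟩]

/-- The right-hand side counts the arguments that are at least `π / 2`: below `π / 2` the two
sines cancel, and each argument reaching `π / 2` turns its partner's term into `-cos`, which is
nonpositive. -/
lemma sin_sub_min_add_sin_sub_min_le {x y : ℝ} (hx : 0 ≤ x) (hy : 0 ≤ y) :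
    sin (x - min y (π / 2)) + sin (y - min x (π / 2)) ≤
      (if π / 2 ≤ x then (1 : ℝ) else 0) + (if π / 2 ≤ y then (1 : ℝ) else 0) := by
  have hpi := pi_pos
  rcases le_or_gt (π / 2) x with hx' | hx' <;> rcases le_or_gt (π / 2) y with hy' | hy'
  · simp only [hx', hy', if_true]
    linarith [sin_le_one (x - min y (π / 2)), sin_le_one (y - min x (π / 2))]
  · simp only [hx', hy'.not_ge, if_true, if_false, add_zero, min_eq_left hy'.le, min_eq_right hx']
    exact sin_sub_add_sin_sub_pi_div_two_le_one (by linarith) hy'.le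
  · simp only [hx'.not_ge, hy', if_true, if_false, zero_add, min_eq_right hy',
      min_eq_left hx'.le]
    rw [add_comm]
    exact sin_sub_add_sin_sub_pi_div_two_le_one (by linarith) hx'.le
  · simp only [hx'.not_ge, hy'.not_ge, if_false, min_eq_left hy'.le, min_eq_left hx'.le]
    rw [← neg_sub x y, sin_neg, add_neg_cancel, add_zero]

theorem stmt_3_general (a b : ℝ) :
    Real.sin (|a| - min |b| (π/2)) + Real.sin (|b| - min |a| (π/2)) ≤
      (if π/2 ≤ |a| then (1:ℝ) else 0) + (if π/2 ≤ |b| then (1:ℝ) else 0) :=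
  sin_sub_min_add_sin_sub_min_le (abs_nonneg a) (abs_nonneg b)

theorem stmt_3 (a b : ℝ) (ha : a ∈ Set.Ioc (-π) π) (hb : b ∈ Set.Ioc (-π) π) :
    Real.sin (|a| - min |b| (π/2)) + Real.sin (|b| - min |a| (π/2)) ≤
      (if π/2 ≤ |a| then (1:ℝ) else 0) + (if π/2 ≤ |b| then (1:ℝ) else 0) :=
  stmt_3_general a b
end

section
/- Let θ be a stable state of the homogeneous Kuramoto model on a graph G with ρ₁(θ) ∈ [0,1] (i.e., Σ_v e^{iθ_v} is a nonnegative real). Then for all 0 < γ < β ≤ π/2, with C_t := {v : |θ_v| ≥ t}: e(C_β, C_β) ≥ e(C_{π/2}, C_β) ≥ sin(β − γ) · e(C_β, (C_γ)^c). -/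
open Real Finset
open scoped ENNReal

noncomputable def kuramotoHessian {V : Type*} [Fintype V] [DecidableEq V]
    (A : Matrix V V ℝ) (θ : V → ℝ) : Matrix V V ℝ :=
  Matrix.of fun v u =>
    if v = u then ∑ w, A v w * Real.cos (θ v - θ w)
    else - (A v u * Real.cos (θ v - θ u))

/-- θ is a stable state: critical point of the Kuramoto energy with PSD Hessian. -/
def IsStableState {V : Type*} [Fintype V] [DecidableEq V]
    (A : Matrix V V ℝ) (θ : V → ℝ) : Prop :=
  (∀ v, ∑ u, A v u * Real.sin (θ v - θ u) = 0) ∧ (kuramotoHessian A θ).PosSemidef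

/-- The order parameter ∑ e^{iθ_v} is a nonnegative real. -/
def OrderParamNonneg {V : Type*} [Fintype V] (θ : V → ℝ) : Prop :=
  ∃ r : ℝ, 0 ≤ r ∧ ∑ v, Complex.exp ((θ v : ℂ) * Complex.I) = (r : ℂ)

/-! Put ψ_v = min(|θ_v|, π/2) and a = |θ_v| − ψ_v ∈ [0, π]. After replacing θ by −θ if necessary
(which preserves stability) so that θ_v = |θ_v|, the addition formula writes Σ_u A_vu sin(θ_u − ψ_v)
as cos a times the vanishing gradient at v plus sin a times the nonnegative diagonal Hessian entry
at v. For v ∈ C_β (`phaseCap θ β`) the term of u is at most K(θ_u, θ_v) on C_β, at most 0 on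
C_γ \ C_β and at most −sin(β − γ) off C_γ; summing over v gives the lower bound. For the upper bound,
K(α, β) + K(β, α) ≤ 1[|α| ≥ π/2] + 1[|β| ≥ π/2], and symmetrising the kernel sum over C_β turns this
into e(C_{π/2}, C_β). -/

theorem sin_le_sin_of_neg_pi_sub_le {b t : ℝ} (hb : b ≤ π / 2) (ht₁ : -π - b ≤ t) (ht₂ : t ≤ b) :
    sin t ≤ sin b := by
  have hcos : 0 ≤ cos ((t + b) / 2) := cos_nonneg_of_mem_Icc ⟨by linarith, by linarith⟩
  have hsin : sin ((t - b) / 2) ≤ 0 := sin_nonpos_of_nonpos_of_neg_pi_le (by linarith) (by linarith)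
  nlinarith [sin_sub_sin t b]

theorem sin_sub_le_sin_abs_sub {t ψ : ℝ} (ht : |t| ≤ π) (hψ₀ : -(π / 2) ≤ ψ) (hψ : ψ ≤ π / 2) :
    sin (t - ψ) ≤ sin (|t| - ψ) := by
  rcases abs_choice t with h | h
  · rw [h]
  · have hsin : 0 ≤ sin |t| := sin_nonneg_of_nonneg_of_le_pi (abs_nonneg t) ht
    have hcos : 0 ≤ cos ψ := cos_nonneg_of_mem_Icc ⟨by linarith, hψ⟩
    have hdiff := sin_sub_sin (|t| - ψ) (t - ψ)
    rw [show (|t| - ψ - (t - ψ)) / 2 = |t| by rw [h]; ring,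
      show (|t| - ψ + (t - ψ)) / 2 = -ψ by rw [h]; ring, cos_neg] at hdiff
    nlinarith

theorem sin_sub_le_ite_add_ite {t ψ β γ : ℝ} (ht : |t| ≤ π) (hγβ : γ < β) (hβψ : β ≤ ψ)
    (hψ₀ : -(π / 2) ≤ ψ) (hψ : ψ ≤ π / 2) :
    sin (t - ψ) ≤ (if β ≤ |t| then sin (|t| - ψ) else 0) + (if γ ≤ |t| then 0 else sin (γ - β)) := by
  have htψ : t - ψ ≤ |t| - ψ := by linarith [le_abs_self t]
  have htψ' : -|t| - ψ ≤ t - ψ := by linarith [neg_abs_le t]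
  by_cases hβt : β ≤ |t|
  · rw [if_pos hβt, if_pos (hγβ.le.trans hβt), add_zero]
    exact sin_sub_le_sin_abs_sub ht hψ₀ hψ
  by_cases hγt : γ ≤ |t|
  · rw [if_neg hβt, if_pos hγt, add_zero]
    exact sin_nonpos_of_nonpos_of_neg_pi_le (by linarith) (by linarith [abs_nonneg t])
  · rw [if_neg hβt, if_neg hγt, zero_add]
    exact sin_le_sin_of_neg_pi_sub_le (by linarith) (by linarith) (by linarith)

noncomputable def kuramotoKernel (α β : ℝ) : ℝ := sin (|α| - min |β| (π / 2))

theorem kuramotoKernel_add_swap_le (α β : ℝ) :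
    kuramotoKernel α β + kuramotoKernel β α ≤
      (if π / 2 ≤ |α| then 1 else 0) + (if π / 2 ≤ |β| then 1 else 0) := by
  have hα := abs_nonneg α
  have hβ := abs_nonneg β
  unfold kuramotoKernel
  split_ifs with hα₂ hβ₂ hβ₂
  · linarith [sin_le_one (|α| - min |β| (π / 2)), sin_le_one (|β| - min |α| (π / 2))]
  · rw [min_eq_right hα₂]
    linarith [sin_le_one (|α| - min |β| (π / 2)),
      sin_nonpos_of_nonpos_of_neg_pi_le (x := |β| - π / 2) (by linarith) (by linarith)]
  · rw [min_eq_right hβ₂]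
    linarith [sin_le_one (|β| - min |α| (π / 2)),
      sin_nonpos_of_nonpos_of_neg_pi_le (x := |α| - π / 2) (by linarith) (by linarith)]
  · rw [min_eq_left (not_le.1 hα₂).le, min_eq_left (not_le.1 hβ₂).le, ← neg_sub |α|, sin_neg]
    simp

section

variable {V : Type*} {A : Matrix V V ℝ}

theorem sum_sum_mul_le_of_add_swap_le (hA : A.IsSymm) (hA₀ : ∀ x y, 0 ≤ A x y) {X : Finset V}
    {K : V → V → ℝ} {w : V → ℝ} (hK : ∀ x ∈ X, ∀ y ∈ X, K x y + K y x ≤ w x + w y) :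
    ∑ x ∈ X, ∑ y ∈ X, A x y * K x y ≤ ∑ x ∈ X, ∑ y ∈ X, A x y * w x := by
  have hswap (f : V → V → ℝ) :
      ∑ x ∈ X, ∑ y ∈ X, A x y * f y x = ∑ x ∈ X, ∑ y ∈ X, A x y * f x y := by
    rw [sum_comm]
    exact sum_congr rfl fun x _ => sum_congr rfl fun y _ => by rw [hA.apply]
  have hsum : ∑ x ∈ X, ∑ y ∈ X, A x y * (K x y + K y x) ≤
      ∑ x ∈ X, ∑ y ∈ X, A x y * (w x + w y) :=
    sum_le_sum fun x hx => sum_le_sum fun y hy =>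
      mul_le_mul_of_nonneg_left (hK x hx y hy) (hA₀ x y)
  simp only [mul_add, sum_add_distrib, hswap (fun x y => K x y), hswap (fun x _ => w x)] at hsum
  linarith

variable [Fintype V]

theorem edgeCount_mono_left (hA₀ : ∀ x y, 0 ≤ A x y) {X X' : Finset V} (hX : X ⊆ X')
    (Y : Finset V) : edgeCount A X Y ≤ edgeCount A X' Y :=
  sum_le_sum_of_subset_of_nonneg hX fun _ _ _ => sum_nonneg fun _ _ => hA₀ _ _

noncomputable def phaseCap (θ : V → ℝ) (t : ℝ) : Finset V := univ.filter fun v => t ≤ |θ v|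

variable {θ : V → ℝ}

theorem phaseCap_anti {s t : ℝ} (hst : s ≤ t) : phaseCap θ t ⊆ phaseCap θ s :=
  fun _ hv => mem_filter.2 ⟨mem_univ _, hst.trans (mem_filter.1 hv).2⟩

theorem sum_kuramotoKernel_le_edgeCount (hA : A.IsSymm) (hA₀ : ∀ x y, 0 ≤ A x y) (θ : V → ℝ)
    {β : ℝ} (hβ : β ≤ π / 2) :
    ∑ v ∈ phaseCap θ β, ∑ u ∈ phaseCap θ β, A v u * kuramotoKernel (θ u) (θ v) ≤
      edgeCount A (phaseCap θ (π / 2)) (phaseCap θ β) := by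
  have hcap : (phaseCap θ β).filter (fun v => π / 2 ≤ |θ v|) = phaseCap θ (π / 2) := by
    ext v
    simp only [phaseCap, filter_filter, mem_filter, mem_univ, true_and]
    exact ⟨And.right, fun h => ⟨hβ.trans h, h⟩⟩
  refine (sum_sum_mul_le_of_add_swap_le hA hA₀ (w := fun v => if π / 2 ≤ |θ v| then 1 else 0)
    fun v _ u _ => (add_comm _ _).trans_le (kuramotoKernel_add_swap_le (θ v) (θ u))).trans_eq ?_
  rw [← hcap, edgeCount, sum_filter]
  exact sum_congr rfl fun v _ => by split_ifs <;> simp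

variable [DecidableEq V]

theorem sum_mul_ite_add_ite (v : V) (ψ β γ : ℝ) :
    ∑ u, A v u * ((if β ≤ |θ u| then sin (|θ u| - ψ) else 0) +
      (if γ ≤ |θ u| then 0 else sin (γ - β))) =
    ∑ u ∈ phaseCap θ β, A v u * sin (|θ u| - ψ) + sin (γ - β) * ∑ u ∈ (phaseCap θ γ)ᶜ, A v u := by
  rw [phaseCap, phaseCap, compl_filter, sum_filter, sum_filter, mul_sum, ← sum_add_distrib]
  exact sum_congr rfl fun u _ => by split_ifs <;> ring

theorem kuramotoHessian_neg (A : Matrix V V ℝ) (θ : V → ℝ) :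
    kuramotoHessian A (-θ) = kuramotoHessian A θ := by
  ext v u
  simp only [kuramotoHessian, Matrix.of_apply, Pi.neg_apply, neg_sub_neg, ← neg_sub (θ v), cos_neg]

namespace IsStableState

theorem neg (h : IsStableState A θ) : IsStableState A (-θ) := by
  refine ⟨fun v => ?_, kuramotoHessian_neg A θ ▸ h.2⟩
  simp only [Pi.neg_apply, neg_sub_neg, ← neg_sub (θ v), sin_neg, mul_neg, sum_neg_distrib, h.1 v,
    neg_zero]

theorem sum_sin_add_nonneg (h : IsStableState A θ) {a : ℝ} (ha : 0 ≤ sin a) (v : V) :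
    0 ≤ ∑ u, A v u * sin (θ u - θ v + a) := by
  have hcrit : ∑ u, A v u * sin (θ u - θ v) = 0 := by
    simp only [← neg_sub (θ v), sin_neg, mul_neg, sum_neg_distrib, h.1 v, neg_zero]
  have hdiag : 0 ≤ ∑ u, A v u * cos (θ u - θ v) := by
    have hcos : ∀ u, cos (θ u - θ v) = cos (θ v - θ u) := fun u => by rw [← cos_neg, neg_sub]
    simpa only [kuramotoHessian, Matrix.of_apply, if_true, hcos] using h.2.diag_nonneg (i := v)
  calc 0 ≤ sin a * ∑ u, A v u * cos (θ u - θ v) := mul_nonneg ha hdiag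
    _ = cos a * ∑ u, A v u * sin (θ u - θ v) + sin a * ∑ u, A v u * cos (θ u - θ v) := by
      rw [hcrit, mul_zero, zero_add]
    _ = ∑ u, A v u * sin (θ u - θ v + a) := by
      simp only [mul_sum, ← sum_add_distrib, sin_add]
      exact sum_congr rfl fun u _ => by ring

theorem mul_sum_compl_le_sum_kuramotoKernel (hA₀ : ∀ v u, 0 ≤ A v u)
    (h : IsStableState A θ) (hθ : ∀ u, |θ u| ≤ π) {β γ : ℝ} (hγβ : γ < β) (hβ : β ≤ π / 2)
    {v : V} (hv : β ≤ |θ v|) :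
    sin (β - γ) * ∑ u ∈ (phaseCap θ γ)ᶜ, A v u ≤
      ∑ u ∈ phaseCap θ β, A v u * kuramotoKernel (θ u) (θ v) := by
  wlog hθv : 0 ≤ θ v generalizing θ
  · simpa [phaseCap, kuramotoKernel] using
      this h.neg (by simpa using hθ) (by simpa using hv) (neg_nonneg.2 (le_of_not_ge hθv))
  set ψ := min |θ v| (π / 2)
  have hψβ : β ≤ ψ := le_min hv hβ
  have hψ₀ : 0 ≤ ψ := le_min (abs_nonneg _) (by positivity)
  have hψ : ψ ≤ π / 2 := min_le_right _ _
  have hsin : 0 ≤ sin (θ v - ψ) :=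
    sin_nonneg_of_nonneg_of_le_pi (by rw [← abs_of_nonneg hθv]; exact sub_nonneg.2 (min_le_left _ _))
      (by linarith [abs_of_nonneg hθv ▸ hθ v])
  have key := h.sum_sin_add_nonneg hsin v
  simp only [sub_add_sub_cancel] at key
  have hbound := calc
    0 ≤ ∑ u, A v u * sin (θ u - ψ) := key
    _ ≤ ∑ u, A v u * ((if β ≤ |θ u| then sin (|θ u| - ψ) else 0) +
          (if γ ≤ |θ u| then 0 else sin (γ - β))) :=
      sum_le_sum fun u _ => mul_le_mul_of_nonneg_left
        (sin_sub_le_ite_add_ite (hθ u) hγβ hψβ (by linarith) hψ) (hA₀ v u)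
    _ = ∑ u ∈ phaseCap θ β, A v u * kuramotoKernel (θ u) (θ v) +
          sin (γ - β) * ∑ u ∈ (phaseCap θ γ)ᶜ, A v u := sum_mul_ite_add_ite v ψ β γ
  rw [← neg_sub β γ, sin_neg] at hbound
  linarith

theorem mul_edgeCount_le_sum_kuramotoKernel (hA₀ : ∀ v u, 0 ≤ A v u)
    (h : IsStableState A θ) (hθ : ∀ u, |θ u| ≤ π) {β γ : ℝ} (hγβ : γ < β) (hβ : β ≤ π / 2) :
    sin (β - γ) * edgeCount A (phaseCap θ β) (phaseCap θ γ)ᶜ ≤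
      ∑ v ∈ phaseCap θ β, ∑ u ∈ phaseCap θ β, A v u * kuramotoKernel (θ u) (θ v) := by
  rw [edgeCount, mul_sum]
  exact sum_le_sum fun v hv =>
    h.mul_sum_compl_le_sum_kuramotoKernel hA₀ hθ hγβ hβ (mem_filter.1 hv).2

end IsStableState

end

theorem stmt_14_general {V : Type*} [Fintype V] [DecidableEq V] (G : SimpleGraph V) [DecidableRel G.Adj]
    (θ : V → ℝ) (hrange : ∀ v, θ v ∈ Set.Ioc (-π) π)
    (hstable : IsStableState (G.adjMatrix ℝ) θ)
    (γ β : ℝ) (hγβ : γ < β) (hβ : β ≤ π/2) :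
    Real.sin (β - γ) *
        edgeCount (G.adjMatrix ℝ) (Finset.univ.filter fun v => β ≤ |θ v|)
          ((Finset.univ.filter fun v => γ ≤ |θ v|)ᶜ) ≤
      edgeCount (G.adjMatrix ℝ) (Finset.univ.filter fun v => π/2 ≤ |θ v|)
        (Finset.univ.filter fun v => β ≤ |θ v|) ∧
    edgeCount (G.adjMatrix ℝ) (Finset.univ.filter fun v => π/2 ≤ |θ v|)
        (Finset.univ.filter fun v => β ≤ |θ v|) ≤
      edgeCount (G.adjMatrix ℝ) (Finset.univ.filter fun v => β ≤ |θ v|)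
        (Finset.univ.filter fun v => β ≤ |θ v|) := by
  have hA₀ : ∀ v u, 0 ≤ G.adjMatrix ℝ v u := fun v u => by
    rw [SimpleGraph.adjMatrix_apply]
    split_ifs <;> norm_num
  have hθ : ∀ v, |θ v| ≤ π := fun v => abs_le.2 ⟨(hrange v).1.le, (hrange v).2⟩
  exact ⟨(hstable.mul_edgeCount_le_sum_kuramotoKernel hA₀ hθ hγβ hβ).trans
      (sum_kuramotoKernel_le_edgeCount G.isSymm_adjMatrix hA₀ θ hβ),
    edgeCount_mono_left hA₀ (phaseCap_anti hβ) _⟩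

theorem stmt_14 {V : Type*} [Fintype V] [DecidableEq V] (G : SimpleGraph V) [DecidableRel G.Adj]
    (θ : V → ℝ) (hrange : ∀ v, θ v ∈ Set.Ioc (-π) π)
    (hstable : IsStableState (G.adjMatrix ℝ) θ) (hρ : OrderParamNonneg θ)
    (γ β : ℝ) (hγ : 0 < γ) (hγβ : γ < β) (hβ : β ≤ π/2) :
    Real.sin (β - γ) *
        edgeCount (G.adjMatrix ℝ) (Finset.univ.filter fun v => β ≤ |θ v|)
          ((Finset.univ.filter fun v => γ ≤ |θ v|)ᶜ) ≤
      edgeCount (G.adjMatrix ℝ) (Finset.univ.filter fun v => π/2 ≤ |θ v|)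
        (Finset.univ.filter fun v => β ≤ |θ v|) ∧
    edgeCount (G.adjMatrix ℝ) (Finset.univ.filter fun v => π/2 ≤ |θ v|)
        (Finset.univ.filter fun v => β ≤ |θ v|) ≤
      edgeCount (G.adjMatrix ℝ) (Finset.univ.filter fun v => β ≤ |θ v|)
        (Finset.univ.filter fun v => β ≤ |θ v|) :=
  stmt_14_general G θ hrange hstable γ β hγβ hβ
end

section
/- Suppose θ is a nontrivial stable state of the homogeneous Kuramoto model on a connected graph H, with phases normalized so that Σ_v e^{iθ_v} is a nonnegative real. Then there exists a vertex v with |θ_v| ≥ π/2 (i.e., the phases do not all lie in the open half-circle (−π/2, π/2)). -/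
open Real Finset
open scoped ENNReal

/-! If all phases lie in the open half-circle `(-π/2, π/2)`, all phase differences are below `π`.
At a vertex of maximal phase every term of the equilibrium equation `∑ᵤ A v u sin (θ v - θ u) = 0`
is then nonnegative, hence zero, so every neighbour shares the maximal phase; by connectivity the
state is trivial. -/

lemma SimpleGraph.Reachable.mem_of_adj_closed {V : Type*} {G : SimpleGraph V} {s : Set V}
    (hs : ∀ ⦃v u⦄, v ∈ s → G.Adj v u → u ∈ s) {a b : V} (hab : G.Reachable a b) (ha : a ∈ s) :
    b ∈ s := by
  obtain ⟨p⟩ := hab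
  induction p with
  | nil => exact ha
  | cons hadj _ ih => exact ih (hs ha hadj)

lemma eq_zero_of_sin_eq_zero_of_nonneg_of_lt_pi {x : ℝ} (hsin : sin x = 0) (h0 : 0 ≤ x)
    (hπ : x < π) : x = 0 := by
  by_contra hx
  exact (sin_pos_of_pos_of_lt_pi (lt_of_le_of_ne h0 (Ne.symm hx)) hπ).ne' hsin

namespace Kuramoto

variable {V : Type*} [Fintype V] {H : SimpleGraph V} [DecidableRel H.Adj]
  {θ : V → ℝ}

lemma eq_of_adj_of_forall_le (hcrit : ∀ v, ∑ u, H.adjMatrix ℝ v u * sin (θ v - θ u) = 0)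
    (harc : ∀ u w, θ u - θ w < π) {v u : V} (hmax : ∀ w, θ w ≤ θ v) (hadj : H.Adj v u) :
    θ u = θ v := by
  have hterm_nonneg : ∀ w ∈ univ, 0 ≤ H.adjMatrix ℝ v w * sin (θ v - θ w) := fun w _ =>
    mul_nonneg (by simp only [SimpleGraph.adjMatrix_apply]; split_ifs <;> norm_num)
      (sin_nonneg_of_nonneg_of_le_pi (sub_nonneg.2 (hmax w)) (harc v w).le)
  have hsin : sin (θ v - θ u) = 0 := by
    simpa [SimpleGraph.adjMatrix_apply, hadj] using
      (sum_eq_zero_iff_of_nonneg hterm_nonneg).1 (hcrit v) u (mem_univ u)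
  linarith [eq_zero_of_sin_eq_zero_of_nonneg_of_lt_pi hsin (sub_nonneg.2 (hmax u)) (harc v u)]

lemma eq_of_critical_of_sub_lt_pi (hconn : H.Connected)
    (hcrit : ∀ v, ∑ u, H.adjMatrix ℝ v u * sin (θ v - θ u) = 0)
    (harc : ∀ u w, θ u - θ w < π) (u w : V) : θ u = θ w := by
  have : Nonempty V := hconn.nonempty
  obtain ⟨v₀, hv₀⟩ := Finite.exists_max θ
  have hmax_closed : ∀ ⦃v u⦄, v ∈ {v | θ v = θ v₀} → H.Adj v u → u ∈ {v | θ v = θ v₀} :=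
    fun v u hv hadj => (eq_of_adj_of_forall_le hcrit harc (hv ▸ hv₀) hadj).trans hv
  have hconst : ∀ x, θ x = θ v₀ := fun x => (hconn v₀ x).mem_of_adj_closed hmax_closed rfl
  rw [hconst u, hconst w]

end Kuramoto

theorem stmt_15_general {V : Type*} [Fintype V] [DecidableEq V] (H : SimpleGraph V) [DecidableRel H.Adj]
    (hconn : H.Connected)
    (θ : V → ℝ)
    (hstable : IsStableState (H.adjMatrix ℝ) θ)
    (hnontriv : ∃ u v, θ u ≠ θ v) :
    ∃ v, π/2 ≤ |θ v| := by
  by_contra! hhalf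
  have harc : ∀ u w, θ u - θ w < π := fun u w => by
    linarith [(abs_lt.1 (hhalf u)).2, (abs_lt.1 (hhalf w)).1]
  obtain ⟨u, w, hne⟩ := hnontriv
  exact hne (Kuramoto.eq_of_critical_of_sub_lt_pi hconn hstable.1 harc u w)

theorem stmt_15 {V : Type*} [Fintype V] [DecidableEq V] (H : SimpleGraph V) [DecidableRel H.Adj]
    (hconn : H.Connected)
    (θ : V → ℝ) (hrange : ∀ v, θ v ∈ Set.Ioc (-π) π)
    (hstable : IsStableState (H.adjMatrix ℝ) θ) (hρ : OrderParamNonneg θ)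
    (hnontriv : ∃ u v, θ u ≠ θ v) :
    ∃ v, π/2 ≤ |θ v| :=
  stmt_15_general H hconn θ hstable hnontriv
end
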